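/- arXiv:2212.05212 — 2 statements merged into one kernel-verified Lean document; each statement's English description precedes it below -/
import Mathlib

section
/- Let 0 < α₁ < α₂, 0 < α₁ p₁ = α₂ p₂ with 1 ≤ p₂ < p₁ < ∞. Then for every f ∈ Ḃ^0_{∞,∞}(ℝⁿ) ∩ Ḃ^{α₂}_{p₂,p₂}(ℝⁿ): ‖f‖_{Ḃ^{α₁}_{p₁,p₁}} ≤ ‖f‖_{Ḃ^0_{∞,∞}}^{1-α₁/α₂} ‖f‖_{Ḃ^{α₂}_{p₂,p₂}}^{α₁/α₂}. -/
open MeasureTheory ENNReal Metric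
open scoped FourierTransform NNReal

noncomputable section

/-- The dilated Littlewood–Paley piece `φ_j(x) = 2^(-jn) • φ(2^(-j) • x)`. -/
def lpPiece (n : ℕ) (φ : EuclideanSpace ℝ (Fin n) → ℂ) (j : ℤ) :
    EuclideanSpace ℝ (Fin n) → ℂ :=
  fun x => (((2:ℝ) ^ (-(j:ℝ) * (n:ℝ)) : ℝ) : ℂ) * φ (((2:ℝ) ^ (-(j:ℝ))) • x)

/-- The Littlewood–Paley block `φ_j * f` (convolution) for a real-valued `f`. -/
def lpBlock (n : ℕ) (φ : EuclideanSpace ℝ (Fin n) → ℂ)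
    (f : EuclideanSpace ℝ (Fin n) → ℝ) (j : ℤ) : EuclideanSpace ℝ (Fin n) → ℂ :=
  fun x => ∫ y, lpPiece n φ j y * (f (x - y) : ℂ)

/-- `φ` generates a Littlewood–Paley (dyadic) decomposition: its Fourier transform is
supported in the annulus `{1/2 < ‖ξ‖ < 2}` and the dyadic dilates sum to `1` away from `0`. -/
def IsLPFamily (n : ℕ) (φ : EuclideanSpace ℝ (Fin n) → ℂ) : Prop :=
  (∀ ξ : EuclideanSpace ℝ (Fin n), 𝓕 φ ξ ≠ 0 → 1/2 < ‖ξ‖ ∧ ‖ξ‖ < 2) ∧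
  ∀ ξ : EuclideanSpace ℝ (Fin n), ξ ≠ 0 →
    HasSum (fun j : ℤ => 𝓕 φ (((2:ℝ) ^ (j:ℝ)) • ξ)) 1

/-- Homogeneous Besov norm of `Ḃ^s_{∞,∞}`: `sup_j 2^(js) ‖φ_j * f‖_{L^∞}`. -/
def besovNormInf (n : ℕ) (φ : EuclideanSpace ℝ (Fin n) → ℂ) (s : ℝ)
    (f : EuclideanSpace ℝ (Fin n) → ℝ) : ℝ≥0∞ :=
  ⨆ j : ℤ, ENNReal.ofReal ((2:ℝ) ^ ((j:ℝ) * s)) * eLpNorm (lpBlock n φ f j) ∞ volume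

/-- Homogeneous Besov norm of `Ḃ^s_{p,p}`: `(Σ_j (2^(js) ‖φ_j * f‖_{L^p})^p)^(1/p)`. -/
def besovNormP (n : ℕ) (φ : EuclideanSpace ℝ (Fin n) → ℂ) (s p : ℝ)
    (f : EuclideanSpace ℝ (Fin n) → ℝ) : ℝ≥0∞ :=
  (∑' j : ℤ, (ENNReal.ofReal ((2:ℝ) ^ ((j:ℝ) * s)) *
    eLpNorm (lpBlock n φ f j) (ENNReal.ofReal p) volume) ^ p) ^ (1/p)

/-- Homogeneous Hölder seminorm of `Ċ^α`. -/
def holderSemi (n : ℕ) (α : ℝ) (f : EuclideanSpace ℝ (Fin n) → ℝ) : ℝ≥0∞ :=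
  ⨆ x, ⨆ y, ENNReal.ofReal (|f x - f y| / ‖x - y‖ ^ α)

/-- The Gagliardo seminorm of the homogeneous fractional Sobolev space `Ẇ^{α,p}`. -/
def gagliardo (n : ℕ) (α p : ℝ) (f : EuclideanSpace ℝ (Fin n) → ℝ) : ℝ≥0∞ :=
  (∫⁻ x, ∫⁻ h, (‖f (x + h) - f x‖₊ : ℝ≥0∞) ^ p /
      (‖h‖₊ : ℝ≥0∞) ^ ((n:ℝ) + α * p)) ^ (1/p)

/-- The Hardy–Littlewood maximal function. -/
def maximal (n : ℕ) (g : EuclideanSpace ℝ (Fin n) → ℝ)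
    (x : EuclideanSpace ℝ (Fin n)) : ℝ≥0∞ :=
  ⨆ (r : ℝ) (_ : 0 < r), (volume (ball x r))⁻¹ * ∫⁻ y in ball x r, (‖g y‖₊ : ℝ≥0∞)

/-- The local oscillation functional
`G_{α,p}(f)(x) = sup_{ε>0} (⨍_{B(0,ε)} |f(x)-f(x-y)|^p dy / ε^(αp))^(1/p)`. -/
def gFun (n : ℕ) (α p : ℝ) (f : EuclideanSpace ℝ (Fin n) → ℝ)
    (x : EuclideanSpace ℝ (Fin n)) : ℝ≥0∞ :=
  ⨆ (ε : ℝ) (_ : 0 < ε),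
    ((volume (ball (0 : EuclideanSpace ℝ (Fin n)) ε))⁻¹ *
      ∫⁻ y in ball (0 : EuclideanSpace ℝ (Fin n)) ε,
        (‖f x - f (x - y)‖₊ : ℝ≥0∞) ^ p / ENNReal.ofReal (ε ^ (α * p))) ^ (1/p)

/-- The average `⨍_{B(0,2|z|)} |f x - f (x+y)| dy`. -/
def avgDiff (n : ℕ) (f : EuclideanSpace ℝ (Fin n) → ℝ)
    (x z : EuclideanSpace ℝ (Fin n)) : ℝ≥0∞ :=
  (volume (ball (0 : EuclideanSpace ℝ (Fin n)) (2 * ‖z‖)))⁻¹ *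
    ∫⁻ y in ball (0 : EuclideanSpace ℝ (Fin n)) (2 * ‖z‖), (‖f x - f (x + y)‖₊ : ℝ≥0∞)

/-- The `L^p`-norm of the gradient `Df`. -/
def gradNorm (n : ℕ) (p : ℝ≥0∞) (f : EuclideanSpace ℝ (Fin n) → ℝ) : ℝ≥0∞ :=
  eLpNorm (fun x => ‖fderiv ℝ f x‖) p volume

/-! On each Littlewood–Paley block, `‖Δⱼf‖_{p₁}^{p₁} ≤ ‖Δⱼf‖_{p₂}^{p₂} ‖Δⱼf‖_∞^{p₁-p₂}` with
`‖Δⱼf‖_∞ ≤ ‖f‖_{Ḃ^0_{∞,∞}}`, and `α₁p₁ = α₂p₂` makes the dyadic weights `2^{jα₁p₁} = 2^{jα₂p₂}`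
coincide. Summing over `j` gives `‖f‖_{Ḃ^{α₁}}^{p₁} ≤ ‖f‖_{Ḃ^{α₂}}^{p₂} ‖f‖_{Ḃ^0_{∞,∞}}^{p₁-p₂}`,
and taking `p₁`-th roots with `p₂/p₁ = α₁/α₂` gives the claim. -/

section Interpolation

variable {X E : Type*} [MeasurableSpace X] [NormedAddCommGroup E] {μ : Measure X}

theorem eLpNorm_ofReal_rpow_eq_lintegral {p : ℝ} (hp : 0 < p) (g : X → E) :
    eLpNorm g (ENNReal.ofReal p) μ ^ p = ∫⁻ x, ‖g x‖ₑ ^ p ∂μ := by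
  have h := eLpNorm_nnreal_pow_eq_lintegral (f := g) (μ := μ) (p := p.toNNReal) (by simpa using hp)
  rwa [Real.coe_toNNReal _ hp.le] at h

theorem eLpNorm_rpow_le_eLpNorm_rpow_mul_eLpNorm_top_rpow {p₁ p₂ : ℝ} (hp₂ : 0 < p₂)
    (hp : p₂ ≤ p₁) {g : X → E} (hg : eLpNorm g ∞ μ ≠ ∞) :
    eLpNorm g (ENNReal.ofReal p₁) μ ^ p₁ ≤
      eLpNorm g (ENNReal.ofReal p₂) μ ^ p₂ * eLpNorm g ∞ μ ^ (p₁ - p₂) := by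
  have hsub : 0 ≤ p₁ - p₂ := sub_nonneg.mpr hp
  rw [eLpNorm_ofReal_rpow_eq_lintegral (hp₂.trans_le hp), eLpNorm_ofReal_rpow_eq_lintegral hp₂,
    ← lintegral_mul_const' _ _ (ENNReal.rpow_ne_top_of_nonneg hsub hg)]
  refine lintegral_mono_ae ?_
  filter_upwards [enorm_ae_le_eLpNormEssSup g μ] with x hx
  calc ‖g x‖ₑ ^ p₁ = ‖g x‖ₑ ^ p₂ * ‖g x‖ₑ ^ (p₁ - p₂) := by
        rw [← ENNReal.rpow_add_of_nonneg _ _ hp₂.le hsub, add_sub_cancel]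
    _ ≤ ‖g x‖ₑ ^ p₂ * eLpNorm g ∞ μ ^ (p₁ - p₂) := by
        rw [eLpNorm_exponent_top]
        gcongr

end Interpolation

section Besov

variable {n : ℕ} {φ : EuclideanSpace ℝ (Fin n) → ℂ} {f : EuclideanSpace ℝ (Fin n) → ℝ}

theorem eLpNorm_lpBlock_top_le_besovNormInf (j : ℤ) :
    eLpNorm (lpBlock n φ f j) ∞ volume ≤ besovNormInf n φ 0 f := by
  rw [besovNormInf]
  exact le_iSup_of_le j (by simp)

theorem besovNormP_rpow {s p : ℝ} (hp : 0 < p) :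
    besovNormP n φ s p f ^ p = ∑' j : ℤ, (ENNReal.ofReal ((2:ℝ) ^ ((j:ℝ) * s)) *
      eLpNorm (lpBlock n φ f j) (ENNReal.ofReal p) volume) ^ p := by
  rw [besovNormP, ← ENNReal.rpow_mul, one_div, inv_mul_cancel₀ hp.ne', ENNReal.rpow_one]

theorem ofReal_two_rpow_rpow_eq {s₁ s₂ p₁ p₂ : ℝ} (h : s₁ * p₁ = s₂ * p₂) (j : ℤ) :
    ENNReal.ofReal ((2:ℝ) ^ ((j:ℝ) * s₁)) ^ p₁ = ENNReal.ofReal ((2:ℝ) ^ ((j:ℝ) * s₂)) ^ p₂ := by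
  rw [ENNReal.ofReal_rpow_of_pos (by positivity), ENNReal.ofReal_rpow_of_pos (by positivity),
    ← Real.rpow_mul zero_le_two, ← Real.rpow_mul zero_le_two, mul_assoc, mul_assoc, h]

theorem besovNormP_rpow_le {s₁ s₂ p₁ p₂ : ℝ} (hp₂ : 0 < p₂) (hp : p₂ ≤ p₁)
    (h : s₁ * p₁ = s₂ * p₂) (hf : besovNormInf n φ 0 f ≠ ∞) :
    besovNormP n φ s₁ p₁ f ^ p₁ ≤
      besovNormP n φ s₂ p₂ f ^ p₂ * besovNormInf n φ 0 f ^ (p₁ - p₂) := by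
  have hp₁ : 0 < p₁ := hp₂.trans_le hp
  rw [besovNormP_rpow hp₁, besovNormP_rpow hp₂, ← ENNReal.tsum_mul_right]
  refine ENNReal.tsum_le_tsum fun j => ?_
  have hblock := eLpNorm_lpBlock_top_le_besovNormInf (φ := φ) (f := f) j
  rw [ENNReal.mul_rpow_of_nonneg _ _ hp₁.le, ENNReal.mul_rpow_of_nonneg _ _ hp₂.le,
    ofReal_two_rpow_rpow_eq h, mul_assoc]
  gcongr
  exact (eLpNorm_rpow_le_eLpNorm_rpow_mul_eLpNorm_top_rpow hp₂ hp
    (hblock.trans_lt hf.lt_top).ne).trans (by gcongr)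

end Besov

theorem stmt8_general (n : ℕ) (α₁ α₂ p₁ p₂ : ℝ) (hα₁ : 0 < α₁)
    (hp₂ : 1 ≤ p₂) (hp : p₂ < p₁) (hrel : α₁ * p₁ = α₂ * p₂)
    (φ : EuclideanSpace ℝ (Fin n) → ℂ)
    (f : EuclideanSpace ℝ (Fin n) → ℝ)
    (hf0 : besovNormInf n φ 0 f < ∞) :
    besovNormP n φ α₁ p₁ f ≤
      besovNormInf n φ 0 f ^ (1 - α₁ / α₂) * besovNormP n φ α₂ p₂ f ^ (α₁ / α₂) := by
  have hp₂0 : 0 < p₂ := zero_lt_one.trans_le hp₂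
  have hp₁0 : 0 < p₁ := hp₂0.trans hp
  have hα₂ : α₂ ≠ 0 := by
    rintro rfl
    nlinarith
  have hexp : α₁ / α₂ = p₂ / p₁ := by
    rw [div_eq_div_iff hα₂ hp₁0.ne']
    linarith
  rw [hexp, ← ENNReal.rpow_le_rpow_iff hp₁0, ENNReal.mul_rpow_of_nonneg _ _ hp₁0.le,
    ← ENNReal.rpow_mul, ← ENNReal.rpow_mul, one_sub_mul, div_mul_cancel₀ _ hp₁0.ne', mul_comm]
  exact besovNormP_rpow_le hp₂0 hp.le hrel hf0.ne

/-- Besov interpolation: `‖f‖_{Ḃ^{α₁}_{p₁,p₁}} ≤ ‖f‖_{Ḃ^0_{∞,∞}}^{1-α₁/α₂} ‖f‖_{Ḃ^{α₂}_{p₂,p₂}}^{α₁/α₂}`. -/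
theorem stmt8 (n : ℕ) (α₁ α₂ p₁ p₂ : ℝ) (hα₁ : 0 < α₁) (h12 : α₁ < α₂)
    (hp₂ : 1 ≤ p₂) (hp : p₂ < p₁) (hrel : α₁ * p₁ = α₂ * p₂)
    (φ : EuclideanSpace ℝ (Fin n) → ℂ) (hφ : IsLPFamily n φ)
    (f : EuclideanSpace ℝ (Fin n) → ℝ)
    (hf0 : besovNormInf n φ 0 f < ∞) (hf2 : besovNormP n φ α₂ p₂ f < ∞) :
    besovNormP n φ α₁ p₁ f ≤
      besovNormInf n φ 0 f ^ (1 - α₁ / α₂) * besovNormP n φ α₂ p₂ f ^ (α₁ / α₂) :=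
  stmt8_general n α₁ α₂ p₁ p₂ hα₁ hp₂ hp hrel φ f hf0
end
end

section
/- Pointwise estimate via gradient: let 0 < α₁ < 1 and p₁ ≥ 1. For f ∈ C¹ (or f weakly differentiable with |Df| locally integrable) and any x ∈ ℝⁿ: ∫_{ℝⁿ} ( ⨍_{B(0,2|z|)} |f(x)-f(x+y)| dy )^{p₁} dz/|z|^{n+α₁p₁} ≤ C [M(f)(x)]^{(1-α₁)p₁} [M(|Df|)(x)]^{α₁p₁}. -/
open MeasureTheory ENNReal Metric
open scoped FourierTransform NNReal

noncomputable section

open Module (finrank)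
open scoped Pointwise

/-!
The average of `|f x - f (x + y)|` over `B(0, 2|z|)` is at most `2 M f (x)` trivially, and at
most `2 |z| M |Df| (x)` by the fundamental theorem of calculus along the segments `[x, x + y]`:
after Fubini, for fixed `t` the points `x + t y` with `y ∈ B(0, r)` fill the ball `B(x, t r)`,
on which the average of `|Df|` is at most `M |Df| (x)`. So the integrand is at most
`2^p min (M f, |z| M |Df|)^p |z|^(-n - α p)`; splitting the `z`-integral at the radius
`|z| = M f / M |Df|` where the two bounds cross, the homogeneity of `|z|^s` turns each piece into
a multiple of `(M f)^((1 - α) p) (M |Df|)^(α p)`.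
-/

theorem ENNReal.rpow_add_mul_div_rpow {A B : ℝ≥0∞} (hB0 : B ≠ 0) (hB : B ≠ ∞) {q₁ q₂ : ℝ}
    (hq₁ : 0 ≤ q₁) :
    B ^ (q₁ + q₂) * (A / B) ^ q₁ = A ^ q₁ * B ^ q₂ := by
  rw [ENNReal.rpow_add _ _ hB0 hB, ENNReal.div_rpow_of_nonneg _ _ hq₁, mul_right_comm,
    ENNReal.mul_div_cancel (by positivity) (by finiteness), mul_comm]

section Translation

variable {G : Type*} [NormedAddCommGroup G] [MeasurableSpace G] [BorelSpace G] (μ : Measure G)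
  [μ.IsAddLeftInvariant]

theorem setLIntegral_ball_zero_comp_add_left (F : G → ℝ≥0∞) (x : G) (r : ℝ) :
    ∫⁻ y in ball 0 r, F (x + y) ∂μ = ∫⁻ y in ball x r, F y ∂μ := by
  have hpre : (x + ·) ⁻¹' ball x r = ball 0 r := by
    ext y
    simp [dist_eq_norm]
  rw [← hpre, (measurePreserving_add_left μ x).setLIntegral_comp_preimage_emb
    (measurableEmbedding_addLeft x)]

end Translation

theorem enorm_sub_le_lintegral_enorm_fderiv {E F : Type*} [NormedAddCommGroup E] [NormedSpace ℝ E]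
    [NormedAddCommGroup F] [NormedSpace ℝ F] [CompleteSpace F] {f : E → F} (hf : ContDiff ℝ 1 f)
    (x y : E) :
    ‖f x - f (x + y)‖ₑ ≤ ‖y‖ₑ * ∫⁻ t in Set.Ioc (0 : ℝ) 1, ‖fderiv ℝ f (x + t • y)‖ₑ := by
  have hderiv (t : ℝ) :
      HasDerivAt (fun t : ℝ => f (x + t • y)) (fderiv ℝ f (x + t • y) y) t := by
    have hline : HasDerivAt (fun t : ℝ => x + t • y) y t := by
      simpa using ((hasDerivAt_id t).smul_const y).const_add x
    exact ((hf.differentiable one_ne_zero) _).hasFDerivAt.comp_hasDerivAt t hline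
  have hcont : Continuous fun t : ℝ => fderiv ℝ f (x + t • y) y := by
    have := hf.continuous_fderiv one_ne_zero
    fun_prop
  calc ‖f x - f (x + y)‖ₑ = ‖∫ t in Set.Ioc (0 : ℝ) 1, fderiv ℝ f (x + t • y) y‖ₑ := by
        rw [enorm_sub_rev, ← intervalIntegral.integral_of_le zero_le_one,
          intervalIntegral.integral_eq_sub_of_hasDerivAt (fun t _ => hderiv t)
            (hcont.intervalIntegrable _ _)]
        simp
    _ ≤ ∫⁻ t in Set.Ioc (0 : ℝ) 1, ‖fderiv ℝ f (x + t • y) y‖ₑ :=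
        enorm_integral_le_lintegral_enorm _
    _ ≤ ∫⁻ t in Set.Ioc (0 : ℝ) 1, ‖fderiv ℝ f (x + t • y)‖ₑ * ‖y‖ₑ :=
        lintegral_mono fun t => ContinuousLinearMap.le_opENorm _ _
    _ = ‖y‖ₑ * ∫⁻ t in Set.Ioc (0 : ℝ) 1, ‖fderiv ℝ f (x + t • y)‖ₑ := by
        rw [lintegral_mul_const' _ _ enorm_ne_top, mul_comm]

section AddHaar

variable {E : Type*} [NormedAddCommGroup E] [NormedSpace ℝ E] [MeasurableSpace E] [BorelSpace E]
  [FiniteDimensional ℝ E] (μ : Measure E) [μ.IsAddHaarMeasure]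

theorem setLIntegral_comp_smul_of_pos (F : E → ℝ≥0∞) (s : Set E) {R : ℝ} (hR : 0 < R) :
    ∫⁻ x in s, F (R • x) ∂μ = ENNReal.ofReal (R ^ finrank ℝ E)⁻¹ * ∫⁻ x in R • s, F x ∂μ := by
  let e : E ≃ᵐ E := (Homeomorph.smul (Units.mk0 R hR.ne')).toMeasurableEquiv
  have hs : e ⁻¹' (R • s) = s := by
    change (fun x => R • x) ⁻¹' (R • s) = s
    rw [Set.preimage_smul₀ hR.ne', smul_smul, inv_mul_cancel₀ hR.ne', one_smul]
  calc ∫⁻ x in s, F (R • x) ∂μ = ∫⁻ x, F x ∂(μ.restrict (e ⁻¹' (R • s))).map e := by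
        rw [hs, lintegral_map_equiv]; rfl
    _ = ∫⁻ x in R • s, F x ∂μ.map (R • ·) := by
        rw [← e.measurableEmbedding.restrict_map]; rfl
    _ = _ := by
        rw [Measure.map_addHaar_smul μ hR.ne', Measure.restrict_smul, lintegral_smul_measure,
          abs_of_pos (by positivity), smul_eq_mul]

theorem setLIntegral_smul_enorm_rpow (s : Set E) {R : ℝ} (hR : 0 < R) (a : ℝ) :
    ∫⁻ x in R • s, ‖x‖ₑ ^ a ∂μ = ENNReal.ofReal R ^ (finrank ℝ E + a) * ∫⁻ x in s, ‖x‖ₑ ^ a ∂μ := by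
  have hRd : ENNReal.ofReal (R ^ finrank ℝ E) ≠ 0 := by positivity
  have hscale := setLIntegral_comp_smul_of_pos μ (‖·‖ₑ ^ a) s hR
  simp only [enorm_smul, Real.enorm_eq_ofReal hR.le,
    ENNReal.mul_rpow_of_ne_top ofReal_ne_top enorm_ne_top] at hscale
  rw [lintegral_const_mul' _ _ (rpow_ne_top_of_ne_zero (by positivity) ofReal_ne_top),
    ENNReal.ofReal_inv_of_pos (by positivity), ← ENNReal.div_eq_inv_mul,
    ENNReal.eq_div_iff hRd ofReal_ne_top] at hscale
  rw [← hscale, ← mul_assoc, ENNReal.rpow_add _ _ (by positivity) ofReal_ne_top,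
    ENNReal.rpow_natCast, ENNReal.ofReal_pow hR.le]

theorem setLIntegral_ball_enorm_rpow_lt_top {a : ℝ} (ha : -(finrank ℝ E : ℝ) < a) :
    ∫⁻ x in ball (0 : E) 1, ‖x‖ₑ ^ a ∂μ < ∞ := by
  rcases (finrank ℝ E).eq_zero_or_pos with hd | hd
  · have : Subsingleton E := Module.finrank_zero_iff.1 hd
    have ha0 : 0 < a := by simpa [hd] using ha
    simp [Subsingleton.elim _ (0 : E), ENNReal.zero_rpow_of_pos ha0]
  have : Nontrivial E := Module.finrank_pos_iff.1 hd
  have hint : IntegrableOn (fun x : E => ‖x‖ ^ a) (ball 0 1) μ :=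
    integrableOn_ball_of_norm_le_rpow (C := 1) (α := -a) hd (by linarith)
      (.of_forall fun x => by simp [abs_of_nonneg (Real.rpow_nonneg (norm_nonneg x) a)])
      (measurable_norm.pow_const a).aestronglyMeasurable
  refine lt_of_eq_of_lt (setLIntegral_congr_fun_ae measurableSet_ball ?_) hint.2
  filter_upwards [Measure.ae_ne μ 0] with x hx _
  rw [Real.enorm_eq_ofReal (by positivity), ← ENNReal.ofReal_rpow_of_pos (norm_pos_iff.2 hx),
    ofReal_norm]

theorem setLIntegral_compl_ball_enorm_rpow_lt_top {a : ℝ} (ha : a < -(finrank ℝ E : ℝ)) :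
    ∫⁻ x in (ball (0 : E) 1)ᶜ, ‖x‖ₑ ^ a ∂μ < ∞ := by
  have hle : ∀ x ∈ (ball (0 : E) 1)ᶜ,
      ‖x‖ₑ ^ a ≤ ENNReal.ofReal (2 ^ (-a)) * ENNReal.ofReal ((1 + ‖x‖) ^ a) := by
    intro x hx
    have hx1 : 1 ≤ ‖x‖ := by simpa using hx
    rw [← ofReal_norm, ENNReal.ofReal_rpow_of_pos (by linarith), ← ENNReal.ofReal_mul
      (by positivity)]
    refine ENNReal.ofReal_le_ofReal ?_
    calc ‖x‖ ^ a = 2 ^ (-a) * (2 * ‖x‖) ^ a := by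
          rw [Real.mul_rpow (by norm_num) (by linarith), ← mul_assoc, ← Real.rpow_add (by norm_num),
            neg_add_cancel, Real.rpow_zero, one_mul]
      _ ≤ 2 ^ (-a) * (1 + ‖x‖) ^ a := by
          have : (0 : ℝ) ≤ finrank ℝ E := Nat.cast_nonneg _
          refine mul_le_mul_of_nonneg_left ?_ (by positivity)
          exact Real.rpow_le_rpow_of_nonpos (by positivity) (by linarith) (by linarith)
  calc ∫⁻ x in (ball (0 : E) 1)ᶜ, ‖x‖ₑ ^ a ∂μ
      ≤ ∫⁻ x in (ball (0 : E) 1)ᶜ,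
          ENNReal.ofReal (2 ^ (-a)) * ENNReal.ofReal ((1 + ‖x‖) ^ a) ∂μ :=
        setLIntegral_mono' measurableSet_ball.compl hle
    _ ≤ ENNReal.ofReal (2 ^ (-a)) * ∫⁻ x, ENNReal.ofReal ((1 + ‖x‖) ^ a) ∂μ := by
        rw [← lintegral_const_mul' _ _ ofReal_ne_top]
        exact setLIntegral_le_lintegral _ _
    _ < ∞ := by
        refine mul_lt_top ofReal_lt_top ?_
        simpa using finite_integral_one_add_norm (μ := μ) (r := -a) (by linarith)

theorem lintegral_min_rpow_div_le_add {p q₂ : ℝ} (hp : 0 < p) (A B : ℝ≥0∞) {R : ℝ} (hR : 0 < R) :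
    ∫⁻ z, min A (‖z‖ₑ * B) ^ p / ‖z‖ₑ ^ (finrank ℝ E + q₂) ∂μ ≤
      B ^ p * ENNReal.ofReal R ^ (p - q₂) *
          ∫⁻ z in ball (0 : E) 1, ‖z‖ₑ ^ (p - (finrank ℝ E + q₂)) ∂μ +
        A ^ p * ENNReal.ofReal R ^ (-q₂) *
          ∫⁻ z in (ball (0 : E) 1)ᶜ, ‖z‖ₑ ^ (-(finrank ℝ E + q₂)) ∂μ := by
  set b : ℝ := finrank ℝ E + q₂
  have hball : ball (0 : E) R = R • ball 0 1 := (smul_unitBall_of_pos hR).symm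
  have hcompl : (ball (0 : E) R)ᶜ = R • (ball 0 1)ᶜ := by
    rw [Set.compl_eq_univ_sdiff, Set.compl_eq_univ_sdiff, Set.smul_set_sdiff₀ hR.ne',
      Set.smul_set_univ₀ hR.ne', hball]
  have hnear (z : E) : min A (‖z‖ₑ * B) ^ p / ‖z‖ₑ ^ b ≤ B ^ p * ‖z‖ₑ ^ (p - b) := by
    calc min A (‖z‖ₑ * B) ^ p / ‖z‖ₑ ^ b ≤ (‖z‖ₑ * B) ^ p / ‖z‖ₑ ^ b := by
          gcongr; exact min_le_right _ _
      _ = B ^ p * (‖z‖ₑ ^ p / ‖z‖ₑ ^ b) := by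
          rw [ENNReal.mul_rpow_of_nonneg _ _ hp.le, mul_comm, mul_div_assoc]
      _ ≤ B ^ p * ‖z‖ₑ ^ (p - b) := by
          gcongr
          rcases eq_or_ne ‖z‖ₑ 0 with hz | hz
          · simp [hz, ENNReal.zero_rpow_of_pos hp]
          · rw [ENNReal.rpow_sub _ _ hz enorm_ne_top]
  have hfar (z : E) : min A (‖z‖ₑ * B) ^ p / ‖z‖ₑ ^ b ≤ A ^ p * ‖z‖ₑ ^ (-b) := by
    calc min A (‖z‖ₑ * B) ^ p / ‖z‖ₑ ^ b ≤ A ^ p / ‖z‖ₑ ^ b := by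
          gcongr; exact min_le_left _ _
      _ = A ^ p * ‖z‖ₑ ^ (-b) := by rw [div_eq_mul_inv, ENNReal.rpow_neg]
  calc ∫⁻ z, min A (‖z‖ₑ * B) ^ p / ‖z‖ₑ ^ b ∂μ
      = (∫⁻ z in ball 0 R, min A (‖z‖ₑ * B) ^ p / ‖z‖ₑ ^ b ∂μ) +
          ∫⁻ z in (ball 0 R)ᶜ, min A (‖z‖ₑ * B) ^ p / ‖z‖ₑ ^ b ∂μ :=
        (lintegral_add_compl _ measurableSet_ball).symm
    _ ≤ (∫⁻ z in ball 0 R, B ^ p * ‖z‖ₑ ^ (p - b) ∂μ) +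
          ∫⁻ z in (ball 0 R)ᶜ, A ^ p * ‖z‖ₑ ^ (-b) ∂μ :=
        add_le_add (lintegral_mono hnear) (lintegral_mono hfar)
    _ = _ := by
        rw [lintegral_const_mul _ (measurable_enorm.pow_const _),
          lintegral_const_mul _ (measurable_enorm.pow_const _), hcompl, hball,
          setLIntegral_smul_enorm_rpow μ _ hR, setLIntegral_smul_enorm_rpow μ _ hR, ← mul_assoc,
          ← mul_assoc]
        congr 4 <;> ring

theorem exists_lintegral_min_rpow_div_le {p q₁ q₂ : ℝ} (hq₁ : 0 < q₁) (hq₂ : 0 < q₂)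
    (hpq : q₁ + q₂ = p) :
    ∃ C : ℝ≥0∞, 0 < C ∧ C < ∞ ∧ ∀ A B : ℝ≥0∞,
      ∫⁻ z, min A (‖z‖ₑ * B) ^ p / ‖z‖ₑ ^ (finrank ℝ E + q₂) ∂μ ≤ C * A ^ q₁ * B ^ q₂ := by
  set c₁ := ∫⁻ z in ball (0 : E) 1, ‖z‖ₑ ^ (p - (finrank ℝ E + q₂)) ∂μ
  set c₂ := ∫⁻ z in (ball (0 : E) 1)ᶜ, ‖z‖ₑ ^ (-(finrank ℝ E + q₂)) ∂μ
  have hc₁ : c₁ < ∞ := setLIntegral_ball_enorm_rpow_lt_top μ (by linarith)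
  have hc₂ : c₂ < ∞ := setLIntegral_compl_ball_enorm_rpow_lt_top μ (by linarith)
  have hp : 0 < p := by linarith
  refine ⟨c₁ + c₂ + 1, by positivity, by finiteness, fun A B => ?_⟩
  rcases eq_or_ne A 0 with rfl | hA0
  · simp [ENNReal.zero_rpow_of_pos hp]
  rcases eq_or_ne B 0 with rfl | hB0
  · simp [ENNReal.zero_rpow_of_pos hp]
  rcases eq_or_ne A ∞ with rfl | hA
  · rw [ENNReal.top_rpow_of_pos hq₁, ENNReal.mul_top (by positivity),
      ENNReal.top_mul (ENNReal.rpow_pos_of_nonneg (pos_iff_ne_zero.2 hB0) hq₂.le).ne']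
    exact le_top
  rcases eq_or_ne B ∞ with rfl | hB
  · rw [ENNReal.top_rpow_of_pos hq₂,
      ENNReal.mul_top (mul_ne_zero (by positivity)
        (ENNReal.rpow_pos_of_nonneg (pos_iff_ne_zero.2 hA0) hq₁.le).ne')]
    exact le_top
  -- Split at `‖z‖ = A / B`, where the two bounds `A` and `‖z‖ₑ * B` of the minimum cross.
  have hR : 0 < (A / B).toReal := ENNReal.toReal_pos (by simp [hA0, hB]) (by finiteness)
  calc ∫⁻ z, min A (‖z‖ₑ * B) ^ p / ‖z‖ₑ ^ (finrank ℝ E + q₂) ∂μ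
      ≤ B ^ p * (A / B) ^ (p - q₂) * c₁ + A ^ p * (A / B) ^ (-q₂) * c₂ := by
        simpa only [ENNReal.ofReal_toReal (by finiteness : A / B ≠ ∞)]
          using lintegral_min_rpow_div_le_add μ hp A B hR
    _ = (c₁ + c₂) * A ^ q₁ * B ^ q₂ := by
        have hnear : B ^ p * (A / B) ^ (p - q₂) = A ^ q₁ * B ^ q₂ := by
          rw [← hpq, add_sub_cancel_right, ENNReal.rpow_add_mul_div_rpow hB0 hB hq₁.le]
        have hfar : A ^ p * (A / B) ^ (-q₂) = A ^ q₁ * B ^ q₂ := by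
          rw [ENNReal.rpow_neg, ← ENNReal.inv_rpow, ENNReal.inv_div (Or.inl hB) (Or.inl hB0),
            ← hpq, add_comm, ENNReal.rpow_add_mul_div_rpow hA0 hA hq₂.le, mul_comm]
        rw [hnear, hfar]
        ring
    _ ≤ (c₁ + c₂ + 1) * A ^ q₁ * B ^ q₂ := by gcongr ?_ * _ * _; exact le_self_add

end AddHaar

section Maximal

variable {n : ℕ}

local notation "ℝⁿ" => EuclideanSpace ℝ (Fin n)

theorem lintegral_ball_le_measure_mul_maximal (g : ℝⁿ → ℝ) (x : ℝⁿ) (r : ℝ) :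
    ∫⁻ y in ball x r, ‖g y‖ₑ ≤ volume (ball x r) * maximal n g x := by
  rcases le_or_gt r 0 with hr | hr
  · simp [ball_eq_empty.2 hr]
  rw [← ENNReal.inv_mul_le_iff (measure_ball_pos volume x hr).ne' measure_ball_lt_top.ne]
  exact le_iSup₂ (f := fun r (_ : 0 < r) => (volume (ball x r))⁻¹ * ∫⁻ y in ball x r, ‖g y‖ₑ) r hr

theorem enorm_le_maximal {g : ℝⁿ → ℝ} {x : ℝⁿ} (hg : ContinuousAt g x) :
    ‖g x‖ₑ ≤ maximal n g x := by
  refine le_of_forall_lt_imp_le_of_dense fun c hc => ?_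
  obtain ⟨δ, hδ, hlt⟩ := eventually_nhds_iff_ball.1 (Filter.Tendsto.eventually_const_lt hc hg.enorm)
  rw [← ENNReal.mul_le_mul_iff_right (measure_ball_pos volume x hδ).ne' measure_ball_lt_top.ne]
  calc volume (ball x δ) * c = ∫⁻ _ in ball x δ, c := by rw [setLIntegral_const, mul_comm]
    _ ≤ ∫⁻ y in ball x δ, ‖g y‖ₑ := setLIntegral_mono' measurableSet_ball fun y hy => (hlt y hy).le
    _ ≤ volume (ball x δ) * maximal n g x := lintegral_ball_le_measure_mul_maximal g x δ

theorem lintegral_ball_comp_add_smul_le (g : ℝⁿ → ℝ) (x : ℝⁿ) {t : ℝ} (ht : 0 < t) (r : ℝ) :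
    ∫⁻ y in ball 0 r, ‖g (x + t • y)‖ₑ ≤ volume (ball (0 : ℝⁿ) r) * maximal n g x := by
  have hball : t • ball (0 : ℝⁿ) r = ball 0 (t * r) := by
    rw [_root_.smul_ball ht.ne', smul_zero, Real.norm_of_nonneg ht.le]
  have hvol : volume (ball x (t * r)) = ENNReal.ofReal (t ^ n) * volume (ball (0 : ℝⁿ) r) := by
    rw [Measure.addHaar_ball_center, ← hball, Measure.addHaar_smul, finrank_euclideanSpace_fin,
      abs_of_pos (by positivity)]
  calc ∫⁻ y in ball 0 r, ‖g (x + t • y)‖ₑ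
      = ENNReal.ofReal (t ^ n)⁻¹ * ∫⁻ y in ball x (t * r), ‖g y‖ₑ := by
        rw [setLIntegral_comp_smul_of_pos volume (fun z => ‖g (x + z)‖ₑ) _ ht,
          finrank_euclideanSpace_fin, hball,
          setLIntegral_ball_zero_comp_add_left volume (fun w => ‖g w‖ₑ)]
    _ ≤ ENNReal.ofReal (t ^ n)⁻¹ * (volume (ball x (t * r)) * maximal n g x) := by
        gcongr
        exact lintegral_ball_le_measure_mul_maximal g x _
    _ = volume (ball (0 : ℝⁿ) r) * maximal n g x := by
        rw [hvol, ← mul_assoc, ← mul_assoc, ← ENNReal.ofReal_mul (by positivity),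
          inv_mul_cancel₀ (by positivity), ENNReal.ofReal_one, one_mul]

theorem lintegral_ball_enorm_sub_le_mul_maximal_fderiv {f : ℝⁿ → ℝ} (hf : ContDiff ℝ 1 f)
    (x : ℝⁿ) (r : ℝ) :
    ∫⁻ y in ball 0 r, ‖f x - f (x + y)‖ₑ ≤
      ENNReal.ofReal r * (volume (ball (0 : ℝⁿ) r) * maximal n (fun y => ‖fderiv ℝ f y‖) x) := by
  have hDf := hf.continuous_fderiv one_ne_zero
  calc ∫⁻ y in ball 0 r, ‖f x - f (x + y)‖ₑ
      ≤ ∫⁻ y in ball 0 r,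
          ENNReal.ofReal r * ∫⁻ t in Set.Ioc (0 : ℝ) 1, ‖fderiv ℝ f (x + t • y)‖ₑ := by
        refine setLIntegral_mono' measurableSet_ball fun y hy => ?_
        refine (enorm_sub_le_lintegral_enorm_fderiv hf x y).trans ?_
        gcongr
        rw [← ofReal_norm]
        exact ENNReal.ofReal_le_ofReal (mem_ball_zero_iff.1 hy).le
    _ = ENNReal.ofReal r *
          ∫⁻ t in Set.Ioc (0 : ℝ) 1, ∫⁻ y in ball 0 r, ‖fderiv ℝ f (x + t • y)‖ₑ := by
        rw [lintegral_const_mul' _ _ ofReal_ne_top, lintegral_lintegral_swap]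
        exact (Continuous.measurable (f := fun p : ℝⁿ × ℝ => ‖fderiv ℝ f (x + p.2 • p.1)‖ₑ)
          (by fun_prop)).aemeasurable
    _ ≤ ENNReal.ofReal r *
          ∫⁻ _ in Set.Ioc (0 : ℝ) 1, volume (ball (0 : ℝⁿ) r) * maximal n (‖fderiv ℝ f ·‖) x := by
        refine mul_le_mul_right (setLIntegral_mono' measurableSet_Ioc fun t ht => ?_) _
        simpa only [enorm_norm] using lintegral_ball_comp_add_smul_le (‖fderiv ℝ f ·‖) x ht.1 r
    _ = _ := by simp

theorem avgDiff_le_of_lintegral_le {f : ℝⁿ → ℝ} {x z : ℝⁿ} {c : ℝ≥0∞}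
    (h : ∫⁻ y in ball 0 (2 * ‖z‖), ‖f x - f (x + y)‖ₑ ≤ volume (ball (0 : ℝⁿ) (2 * ‖z‖)) * c) :
    avgDiff n f x z ≤ c := by
  change (volume (ball (0 : ℝⁿ) (2 * ‖z‖)))⁻¹ *
    ∫⁻ y in ball 0 (2 * ‖z‖), ‖f x - f (x + y)‖ₑ ≤ c
  rcases eq_or_ne (volume (ball (0 : ℝⁿ) (2 * ‖z‖))) 0 with h0 | h0
  · rw [h0, zero_mul, nonpos_iff_eq_zero] at h
    simp [h]
  calc _ ≤ (volume (ball (0 : ℝⁿ) (2 * ‖z‖)))⁻¹ *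
        (volume (ball (0 : ℝⁿ) (2 * ‖z‖)) * c) := mul_le_mul_right h _
    _ = c := by rw [← mul_assoc, ENNReal.inv_mul_cancel h0 measure_ball_lt_top.ne, one_mul]

theorem avgDiff_le_two_mul_maximal {f : ℝⁿ → ℝ} (hf : Continuous f) (x z : ℝⁿ) :
    avgDiff n f x z ≤ 2 * maximal n f x := by
  refine avgDiff_le_of_lintegral_le ?_
  set V := volume (ball (0 : ℝⁿ) (2 * ‖z‖))
  calc ∫⁻ y in ball 0 (2 * ‖z‖), ‖f x - f (x + y)‖ₑ
      ≤ ∫⁻ y in ball 0 (2 * ‖z‖), (‖f x‖ₑ + ‖f (x + (1 : ℝ) • y)‖ₑ) :=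
        lintegral_mono fun y => by simpa using enorm_sub_le
    _ = V * ‖f x‖ₑ + ∫⁻ y in ball 0 (2 * ‖z‖), ‖f (x + (1 : ℝ) • y)‖ₑ := by
        rw [lintegral_add_left measurable_const, setLIntegral_const, mul_comm]
    _ ≤ V * maximal n f x + V * maximal n f x := by
        gcongr
        · exact enorm_le_maximal hf.continuousAt
        · exact lintegral_ball_comp_add_smul_le f x one_pos _
    _ = V * (2 * maximal n f x) := by ring

theorem avgDiff_le_two_mul_enorm_mul_maximal_fderiv {f : ℝⁿ → ℝ} (hf : ContDiff ℝ 1 f)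
    (x z : ℝⁿ) : avgDiff n f x z ≤ 2 * ‖z‖ₑ * maximal n (fun y => ‖fderiv ℝ f y‖) x := by
  refine avgDiff_le_of_lintegral_le
    ((lintegral_ball_enorm_sub_le_mul_maximal_fderiv hf x _).trans_eq ?_)
  rw [ENNReal.ofReal_mul zero_le_two, ofReal_norm, ENNReal.ofReal_ofNat]
  ring

theorem avgDiff_le_two_mul_min {f : ℝⁿ → ℝ} (hf : ContDiff ℝ 1 f) (x z : ℝⁿ) :
    avgDiff n f x z ≤
      2 * min (maximal n f x) (‖z‖ₑ * maximal n (fun y => ‖fderiv ℝ f y‖) x) := by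
  rw [mul_min, ← mul_assoc]
  exact le_min (avgDiff_le_two_mul_maximal hf.continuous x z)
    (avgDiff_le_two_mul_enorm_mul_maximal_fderiv hf x z)

end Maximal

/-- Pointwise estimate of the averaged Gagliardo integrand by
`M(f)(x)^{(1-α₁)p₁} M(|Df|)(x)^{α₁p₁}`. -/
theorem stmt13 (n : ℕ) (α₁ p₁ : ℝ) (hα₁ : 0 < α₁) (hα₁' : α₁ < 1) (hp₁ : 1 ≤ p₁) :
    ∃ C : ℝ≥0∞, 0 < C ∧ C < ∞ ∧
      ∀ f : EuclideanSpace ℝ (Fin n) → ℝ, ContDiff ℝ 1 f →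
        ∀ x, (∫⁻ z, avgDiff n f x z ^ p₁ /
            (‖z‖₊ : ℝ≥0∞) ^ ((n:ℝ) + α₁ * p₁)) ≤
          C * maximal n f x ^ ((1 - α₁) * p₁) *
            maximal n (fun y => ‖fderiv ℝ f y‖) x ^ (α₁ * p₁) := by
  obtain ⟨K, hK0, hK, hint⟩ := exists_lintegral_min_rpow_div_le
    (volume : Measure (EuclideanSpace ℝ (Fin n))) (p := p₁) (q₁ := (1 - α₁) * p₁) (q₂ := α₁ * p₁)
    (by nlinarith) (by positivity) (by ring)
  refine ⟨2 ^ p₁ * K, ENNReal.mul_pos (by positivity) hK0.ne', by finiteness, fun f hf x => ?_⟩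
  set A := maximal n f x
  set B := maximal n (fun y => ‖fderiv ℝ f y‖) x
  calc ∫⁻ z, avgDiff n f x z ^ p₁ / ‖z‖ₑ ^ ((n : ℝ) + α₁ * p₁)
      ≤ ∫⁻ z, 2 ^ p₁ * (min A (‖z‖ₑ * B) ^ p₁ / ‖z‖ₑ ^ ((n : ℝ) + α₁ * p₁)) := by
        refine lintegral_mono fun z => ?_
        rw [← mul_div_assoc, ← ENNReal.mul_rpow_of_nonneg _ _ (by linarith)]
        gcongr
        exact avgDiff_le_two_mul_min hf x z
    _ = 2 ^ p₁ * ∫⁻ z, min A (‖z‖ₑ * B) ^ p₁ / ‖z‖ₑ ^ ((n : ℝ) + α₁ * p₁) :=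
        lintegral_const_mul' _ _ (by finiteness)
    _ ≤ 2 ^ p₁ * (K * A ^ ((1 - α₁) * p₁) * B ^ (α₁ * p₁)) := by
        gcongr
        simpa only [finrank_euclideanSpace_fin] using hint A B
    _ = 2 ^ p₁ * K * A ^ ((1 - α₁) * p₁) * B ^ (α₁ * p₁) := by ring
end
end
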